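/- Let G be a finitely generated group in which every maximal subgroup is normal. Then every subset S of G that generates G as a normal subgroup (i.e., the normal closure of S equals G) already generates G as a subgroup. -/

import Mathlib

/-! Finite generation makes `⊤` a compact element of the subgroup lattice, so a proper subgroup
`closure S` would lie in a maximal subgroup `M`. Since `M` is normal, it would contain the normal
closure of `S`, which is all of `G`. -/

namespace Subgroup

variable {G : Type*} [Group G]

theorem isCompactElement_closure_singleton (x : G) :
    IsCompactElement (closure {x} : Subgroup G) := by
  rw [CompleteLattice.isCompactElement_iff_le_of_directed_sSup_le]
  intro K hne hdir hle
  obtain ⟨H, hHK, hxH⟩ := (mem_sSup_of_directedOn hne hdir).mp (hle (subset_closure rfl))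
  exact ⟨H, hHK, (closure_le H).mpr (Set.singleton_subset_iff.mpr hxH)⟩

theorem isCompactElement_closure_finset (T : Finset G) :
    IsCompactElement (closure (T : Set G)) := by
  have hT : closure (T : Set G) = T.sup fun x => closure {x} := by
    rw [Finset.sup_eq_iSup, ← Set.biUnion_of_singleton (T : Set G)]
    simp only [closure_iUnion, Finset.mem_coe]
  rw [hT]
  exact CompleteLattice.isCompactElement_finsetSup T fun x _ => isCompactElement_closure_singleton x

end Subgroup

theorem Group.FG.isCoatomic_subgroup {G : Type*} [Group G] (hfg : Group.FG G) :
    IsCoatomic (Subgroup G) := by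
  obtain ⟨T, hT⟩ := hfg.out
  exact CompleteLattice.coatomic_of_top_compact (hT ▸ Subgroup.isCompactElement_closure_finset T)

/-- If `G` is a finitely generated group in which every maximal subgroup is normal,
then every subset whose normal closure is the whole group already generates `G`. -/
theorem stmt_0 {G : Type*} [Group G] (hfg : Group.FG G)
    (hmax : ∀ M : Subgroup G, IsCoatom M → M.Normal)
    (S : Set G) (hS : Subgroup.normalClosure S = ⊤) :
    Subgroup.closure S = ⊤ := by
  have := hfg.isCoatomic_subgroup
  refine (eq_top_or_exists_le_coatom (Subgroup.closure S)).resolve_right ?_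
  rintro ⟨M, hM, hSM⟩
  have := hmax M hM
  have hMtop : (⊤ : Subgroup G) ≤ M :=
    hS ▸ Subgroup.normalClosure_le_normal ((Subgroup.closure_le M).mp hSM)
  exact hM.1 (top_le_iff.mp hMtop)
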